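/- The function C(v) = 2v·arsinh(v/2) − 2√(4 + v²) + 4 satisfies (1/2)·|s|·log(1 + |s|) ≤ C(s) ≤ 2·|s|·log(1 + |s|) for all s ∈ ℝ. -/

import Mathlib

/-!
`C` is even, `C' = 2 arsinh (·/2)` and `C 0 = 0`, so both bounds reduce to comparing `arsinh`
with `log` on `[0, ∞)`: `log (1 + x) ≤ arsinh x ≤ log (1 + 2x)`. The upper bound then follows
pointwise from `√(4 + t²) ≥ 2`; for the lower bound, the derivative of `t log (1 + t) / 2` is at most
`log (1 + t) ≤ 2 log (1 + t/2) ≤ 2 arsinh (t/2)`, so the difference with `C` increases from `0`.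
-/

noncomputable def C (v : ℝ) : ℝ :=
  2 * v * Real.arsinh (v / 2) - 2 * Real.sqrt (4 + v ^ 2) + 4

open Real Set

lemma log_one_add_le_arsinh {x : ℝ} (hx : 0 ≤ x) : log (1 + x) ≤ arsinh x := by
  refine log_le_log (by positivity) ?_
  have : 1 ≤ √(1 + x ^ 2) := one_le_sqrt.2 (by nlinarith)
  linarith

lemma arsinh_le_log_one_add_two_mul {x : ℝ} (hx : 0 ≤ x) : arsinh x ≤ log (1 + 2 * x) := by
  refine log_le_log (by positivity) ?_
  have : √(1 + x ^ 2) ≤ 1 + x := sqrt_le_iff.2 ⟨by positivity, by nlinarith⟩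
  linarith

lemma C_neg (v : ℝ) : C (-v) = C v := by
  simp only [C, neg_div, arsinh_neg, even_two.neg_pow]
  ring

lemma C_abs (v : ℝ) : C |v| = C v := by
  rcases abs_choice v with h | h <;> rw [h]
  exact C_neg v

lemma C_zero : C 0 = 0 := by
  have : √4 = 2 := sqrt_eq_iff_eq_sq (by norm_num) (by norm_num) |>.2 (by norm_num)
  norm_num [C, this]

lemma hasDerivAt_C (v : ℝ) : HasDerivAt C (2 * arsinh (v / 2)) v := by
  have hArsinh : HasDerivAt (fun v => arsinh (v / 2)) ((√(1 + (v / 2) ^ 2))⁻¹ * (1 / 2)) v := by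
    simpa using ((hasDerivAt_id v).div_const 2).arsinh
  have hSqrt : HasDerivAt (fun v => √(4 + v ^ 2)) (2 * v / (2 * √(4 + v ^ 2))) v := by
    have : HasDerivAt (fun v : ℝ => 4 + v ^ 2) (2 * v) v := by
      simpa using (hasDerivAt_pow 2 v).const_add 4
    exact this.sqrt (by positivity)
  have hC := (((hasDerivAt_id' v).const_mul 2).fun_mul hArsinh).fun_sub (hSqrt.const_mul 2)
  refine (hC.add_const 4).congr_deriv ?_
  have hsplit : √(4 + v ^ 2) = 2 * √(1 + (v / 2) ^ 2) := by
    rw [show 4 + v ^ 2 = 2 ^ 2 * (1 + (v / 2) ^ 2) by ring, sqrt_mul (by positivity),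
      sqrt_sq zero_le_two]
  have : 0 < √(1 + (v / 2) ^ 2) := sqrt_pos.2 (by positivity)
  rw [hsplit]
  field_simp
  ring

lemma C_le_two_mul_mul_log {t : ℝ} (ht : 0 ≤ t) : C t ≤ 2 * t * log (1 + t) := by
  have hArsinh : arsinh (t / 2) ≤ log (1 + t) := by
    simpa [mul_div_cancel₀] using arsinh_le_log_one_add_two_mul (by linarith : 0 ≤ t / 2)
  have hSqrt : 2 ≤ √(4 + t ^ 2) := le_sqrt_of_sq_le (by nlinarith)
  have := mul_le_mul_of_nonneg_left hArsinh (by linarith : 0 ≤ 2 * t)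
  simp only [C]
  linarith

lemma hasDerivAt_mul_log_one_add {t : ℝ} (ht : -1 < t) :
    HasDerivAt (fun t => t * log (1 + t)) (log (1 + t) + t / (1 + t)) t := by
  have hLog : HasDerivAt (fun t => log (1 + t)) (1 / (1 + t)) t := by
    simpa using ((hasDerivAt_id' t).const_add 1).log (by linarith)
  refine ((hasDerivAt_id' t).fun_mul hLog).congr_deriv ?_
  ring

lemma log_one_add_add_div_le_four_mul_arsinh {t : ℝ} (ht : 0 ≤ t) :
    log (1 + t) + t / (1 + t) ≤ 4 * arsinh (t / 2) := by
  have hDiv : t / (1 + t) ≤ log (1 + t) := by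
    have := one_sub_inv_le_log_of_pos (by linarith : 0 < 1 + t)
    rwa [show 1 - (1 + t)⁻¹ = t / (1 + t) by field_simp; ring] at this
  have hHalf : log (1 + t) ≤ 2 * log (1 + t / 2) := by
    rw [← log_rpow (by positivity)]
    exact log_le_log (by linarith) (by norm_num; nlinarith)
  linarith [log_one_add_le_arsinh (by linarith : 0 ≤ t / 2)]

lemma half_mul_mul_log_le_C {t : ℝ} (ht : 0 ≤ t) : 1 / 2 * t * log (1 + t) ≤ C t := by
  have hDeriv : ∀ x ∈ Ici (0 : ℝ), HasDerivAt (fun t => C t - 1 / 2 * (t * log (1 + t)))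
      (2 * arsinh (x / 2) - 1 / 2 * (log (1 + x) + x / (1 + x))) x := fun x hx =>
    (hasDerivAt_C x).sub ((hasDerivAt_mul_log_one_add (by linarith [mem_Ici.1 hx])).const_mul _)
  have hMono := monotoneOn_of_hasDerivWithinAt_nonneg (convex_Ici 0)
    (fun x hx => (hDeriv x hx).continuousAt.continuousWithinAt)
    (fun x hx => (hDeriv x (interior_subset hx)).hasDerivWithinAt)
    (fun x hx => by linarith [log_one_add_add_div_le_four_mul_arsinh (interior_subset hx)])
  have := hMono self_mem_Ici ht ht
  simp only [C_zero, zero_mul, mul_zero, sub_zero] at this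
  linarith

theorem c_growth (s : ℝ) :
    (1 / 2) * |s| * Real.log (1 + |s|) ≤ C s ∧
      C s ≤ 2 * |s| * Real.log (1 + |s|) := by
  rw [← C_abs s]
  exact ⟨half_mul_mul_log_le_C (abs_nonneg s), C_le_two_mul_mul_log (abs_nonneg s)⟩
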